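/- arXiv:1511.07536 — 2 statements merged into one kernel-verified Lean document; each statement's English description precedes it below -/
import Mathlib

section
/- Let μ be a probability measure on a measurable space Ω, let A, B, C be measurable sets, and let r₁, r₂ ∈ [0,1] with r₁ < 1. If μ(A ∩ B) ≥ (1 − r₁)·μ(A) and μ(A ∩ C) ≥ (1 − r₂)·μ(A), then μ(A ∩ B ∩ C) ≥ (1 − r₂/(1 − r₁))·μ(A ∩ B). (This is the sharp inequality underlying the soundness of the cautious-monotonicity rule CM^q, from which the bound min(r₁+r₂,1) follows.) -/
/-!
Write `a, b, c, d` for the measures of `A`, `A ∩ B`, `A ∩ C`, `A ∩ B ∩ C`. Inclusion–exclusion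
inside `A` gives `d ≥ b + c - a ≥ b - r₂ a`, and the first hypothesis bounds `a` by
`b / (1 - r₁)`, so `d ≥ (1 - r₂ / (1 - r₁)) b`.
-/

open MeasureTheory

namespace ENNReal

theorem ofReal_mul_le_of_le_toReal {x : ℝ} {a b : ℝ≥0∞} (ha : a ≠ ⊤)
    (h : x * a.toReal ≤ b.toReal) : ENNReal.ofReal x * a ≤ b := by
  rcases eq_or_ne b ⊤ with rfl | hb
  · exact le_top
  rw [← ofReal_toReal ha, ← ofReal_mul' toReal_nonneg]
  exact (ofReal_le_iff_le_toReal hb).2 h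

theorem mul_toReal_le_of_ofReal_mul_le {x : ℝ} {a b : ℝ≥0∞} (hx : 0 ≤ x) (hb : b ≠ ⊤)
    (h : ENNReal.ofReal x * a ≤ b) : x * a.toReal ≤ b.toReal := by
  simpa only [toReal_mul, toReal_ofReal hx] using toReal_mono hb h

end ENNReal

theorem measure_inter_add_measure_inter_le {Ω : Type*} [MeasurableSpace Ω] (μ : Measure Ω)
    (A B : Set Ω) {C : Set Ω} (hC : MeasurableSet C) :
    μ (A ∩ B) + μ (A ∩ C) ≤ μ (A ∩ B ∩ C) + μ A :=
  calc μ (A ∩ B) + μ (A ∩ C) ≤ μ (A ∩ B ∩ C) + μ (A \ C) + μ (A ∩ C) := by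
        gcongr
        exact (measure_le_inter_add_sdiff μ _ C).trans (by gcongr; exact Set.inter_subset_left)
    _ = μ (A ∩ B ∩ C) + μ A := by
        rw [add_assoc, add_comm (μ (A \ C)), measure_inter_add_sdiff A hC]

theorem le_of_cautious_monotonicity {a b c d r₁ r₂ : ℝ} (hr₁ : r₁ < 1) (hr₂ : 0 ≤ r₂)
    (h₁ : (1 - r₁) * a ≤ b) (h₂ : (1 - r₂) * a ≤ c) (hbc : b + c ≤ d + a) :
    (1 - r₂ / (1 - r₁)) * b ≤ d :=
  have hab : a ≤ b / (1 - r₁) := (le_div_iff₀' (sub_pos.2 hr₁)).2 h₁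
  calc (1 - r₂ / (1 - r₁)) * b = b - r₂ * (b / (1 - r₁)) := by ring
    _ ≤ b - r₂ * a := by gcongr
    _ ≤ d := by linarith

theorem CMq_sharp_general {Ω : Type*} [MeasurableSpace Ω]
    (μ : Measure Ω) [IsProbabilityMeasure μ] (A B C : Set Ω)
    (hC : MeasurableSet C)
    (r₁ r₂ : ℝ) (hr₁1 : r₁ < 1) (hr₂0 : 0 ≤ r₂) (hr₂1 : r₂ ≤ 1)
    (h₁ : ENNReal.ofReal (1 - r₁) * μ A ≤ μ (A ∩ B))
    (h₂ : ENNReal.ofReal (1 - r₂) * μ A ≤ μ (A ∩ C)) :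
    ENNReal.ofReal (1 - r₂ / (1 - r₁)) * μ (A ∩ B) ≤ μ (A ∩ B ∩ C) := by
  refine ENNReal.ofReal_mul_le_of_le_toReal (measure_ne_top μ _)
    (le_of_cautious_monotonicity (a := (μ A).toReal) (c := (μ (A ∩ C)).toReal)
      hr₁1 hr₂0 ?_ ?_ ?_)
  · exact ENNReal.mul_toReal_le_of_ofReal_mul_le (sub_pos.2 hr₁1).le (measure_ne_top μ _) h₁
  · exact ENNReal.mul_toReal_le_of_ofReal_mul_le (sub_nonneg.2 hr₂1) (measure_ne_top μ _) h₂
  · have h := ENNReal.toReal_mono (by finiteness) (measure_inter_add_measure_inter_le μ A B hC)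
    rwa [ENNReal.toReal_add (measure_ne_top μ _) (measure_ne_top μ _),
      ENNReal.toReal_add (measure_ne_top μ _) (measure_ne_top μ _)] at h

/-- The sharp inequality underlying the soundness of CM^q. -/
theorem CMq_sharp {Ω : Type*} [MeasurableSpace Ω]
    (μ : Measure Ω) [IsProbabilityMeasure μ] (A B C : Set Ω)
    (hA : MeasurableSet A) (hB : MeasurableSet B) (hC : MeasurableSet C)
    (r₁ r₂ : ℝ) (hr₁0 : 0 ≤ r₁) (hr₁1 : r₁ < 1) (hr₂0 : 0 ≤ r₂) (hr₂1 : r₂ ≤ 1)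
    (h₁ : ENNReal.ofReal (1 - r₁) * μ A ≤ μ (A ∩ B))
    (h₂ : ENNReal.ofReal (1 - r₂) * μ A ≤ μ (A ∩ C)) :
    ENNReal.ofReal (1 - r₂ / (1 - r₁)) * μ (A ∩ B) ≤ μ (A ∩ B ∩ C) :=
  CMq_sharp_general μ A B C hC r₁ r₂ hr₁1 hr₂0 hr₂1 h₁ h₂
end

section
/- Let (μₙ)_{n∈ℕ} be a sequence of probability measures on a measurable space Ω and let A, B, C be measurable sets. Suppose that for every k ∈ ℕ there exists N such that for all n ≥ N, μₙ(A ∩ B) ≥ (1 − 1/n^k)·μₙ(A), and likewise for every k there exists N such that for all n ≥ N, μₙ(A ∩ C) ≥ (1 − 1/n^k)·μₙ(A). Then for every k ∈ ℕ there exists N such that for all n ≥ N, μₙ(A ∩ B ∩ C) ≥ (1 − 1/n^k)·μₙ(A ∩ B). (This is the soundness of the KLM cautious-monotonicity rule CM under the super-polynomial ε-semantics.) -/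
open MeasureTheory Filter Set
open scoped ENNReal

/-!
For `n ≥ 2` the first hypothesis at `k = 1` already gives `μₙ(A) ≤ 2 μₙ(A ∩ B)`, and the
second one at `k + 1` bounds the exceptional mass of `C` inside `A`:
`μₙ((A ∩ B) \ C) ≤ μₙ(A \ C) ≤ μₙ(A) / n^(k+1) ≤ 2 μₙ(A ∩ B) / n^(k+1) ≤ μₙ(A ∩ B) / n^k`.
-/

theorem ENNReal.le_iff_le_of_add_eq_add {a b c d : ℝ≥0∞} (hb : b ≠ ∞) (hc : c ≠ ∞)
    (h : a + b = c + d) : a ≤ c ↔ d ≤ b := by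
  rw [← ENNReal.add_le_add_iff_right hb, h, ENNReal.add_le_add_iff_left hc]

theorem ENNReal.ofReal_one_sub_add_ofReal {ε : ℝ} (h₀ : 0 ≤ ε) (h₁ : ε ≤ 1) :
    ENNReal.ofReal (1 - ε) + ENNReal.ofReal ε = 1 := by
  rw [← ENNReal.ofReal_add (by linarith) h₀]
  simp

theorem ENNReal.le_two_mul_of_ofReal_one_sub_mul_le {x y : ℝ≥0∞} {η : ℝ} (hη : η ≤ 1 / 2)
    (h : ENNReal.ofReal (1 - η) * x ≤ y) : x ≤ 2 * y :=
  calc x = 2 * (ENNReal.ofReal (1 / 2) * x) := by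
        rw [← mul_assoc, ← ENNReal.ofReal_ofNat 2, ← ENNReal.ofReal_mul (by norm_num)]
        norm_num
    _ ≤ 2 * (ENNReal.ofReal (1 - η) * x) := by gcongr; linarith
    _ ≤ 2 * y := by gcongr

theorem two_mul_one_div_pow_succ_le {x : ℝ} (hx : 2 ≤ x) (k : ℕ) :
    2 * (1 / x ^ (k + 1)) ≤ 1 / x ^ k := by
  have hxk : 0 < x ^ k := by positivity
  rw [pow_succ, mul_one_div, div_le_div_iff₀ (by positivity) hxk]
  nlinarith

namespace MeasureTheory

variable {Ω : Type*} [MeasurableSpace Ω] {μ : Measure Ω} [IsFiniteMeasure μ] {A B C : Set Ω}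

theorem ofReal_one_sub_mul_le_measure_inter_iff (hC : MeasurableSet C) {ε : ℝ} (h₀ : 0 ≤ ε)
    (h₁ : ε ≤ 1) :
    ENNReal.ofReal (1 - ε) * μ A ≤ μ (A ∩ C) ↔ μ (A \ C) ≤ ENNReal.ofReal ε * μ A := by
  refine ENNReal.le_iff_le_of_add_eq_add
    (ENNReal.mul_ne_top ENNReal.ofReal_ne_top (measure_ne_top _ _)) (measure_ne_top _ _) ?_
  rw [← add_mul, ENNReal.ofReal_one_sub_add_ofReal h₀ h₁, one_mul, measure_inter_add_sdiff A hC]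

theorem ofReal_one_sub_mul_le_measure_inter_inter (hC : MeasurableSet C) {η ε δ : ℝ}
    (hη : η ≤ 1 / 2) (hε : 0 ≤ ε) (hεδ : 2 * ε ≤ δ) (hδ : δ ≤ 1)
    (hAB : ENNReal.ofReal (1 - η) * μ A ≤ μ (A ∩ B))
    (hAC : ENNReal.ofReal (1 - ε) * μ A ≤ μ (A ∩ C)) :
    ENNReal.ofReal (1 - δ) * μ (A ∩ B) ≤ μ (A ∩ B ∩ C) := by
  rw [ofReal_one_sub_mul_le_measure_inter_iff hC (by linarith) hδ]
  rw [ofReal_one_sub_mul_le_measure_inter_iff hC hε (by linarith)] at hAC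
  calc μ ((A ∩ B) \ C) ≤ μ (A \ C) := measure_mono (sdiff_subset_sdiff_left inter_subset_left)
    _ ≤ ENNReal.ofReal ε * μ A := hAC
    _ ≤ ENNReal.ofReal ε * (2 * μ (A ∩ B)) := by
        gcongr; exact ENNReal.le_two_mul_of_ofReal_one_sub_mul_le hη hAB
    _ = ENNReal.ofReal (2 * ε) * μ (A ∩ B) := by
        rw [ENNReal.ofReal_mul zero_le_two, ENNReal.ofReal_ofNat]; ring
    _ ≤ ENNReal.ofReal δ * μ (A ∩ B) := by gcongr

end MeasureTheory

theorem KLM_CM_superpoly_general {Ω : Type*} [MeasurableSpace Ω]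
    (μ : ℕ → Measure Ω) (hμ : ∀ n, IsProbabilityMeasure (μ n))
    (A B C : Set Ω)
    (hC : MeasurableSet C)
    (h₁ : ∀ k : ℕ, ∃ N : ℕ, ∀ n ≥ N,
      ENNReal.ofReal (1 - 1 / (n : ℝ) ^ k) * μ n A ≤ μ n (A ∩ B))
    (h₂ : ∀ k : ℕ, ∃ N : ℕ, ∀ n ≥ N,
      ENNReal.ofReal (1 - 1 / (n : ℝ) ^ k) * μ n A ≤ μ n (A ∩ C)) :
    ∀ k : ℕ, ∃ N : ℕ, ∀ n ≥ N,
      ENNReal.ofReal (1 - 1 / (n : ℝ) ^ k) * μ n (A ∩ B) ≤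
        μ n (A ∩ B ∩ C) := by
  intro k
  refine eventually_atTop.1 ?_
  filter_upwards [eventually_atTop.2 (h₁ 1), eventually_atTop.2 (h₂ (k + 1)),
    eventually_ge_atTop 2] with n hAB hAC hn
  have := hμ n
  have hn : (2 : ℝ) ≤ n := by exact_mod_cast hn
  exact ofReal_one_sub_mul_le_measure_inter_inter hC
    (by simpa using one_div_le_one_div_of_le two_pos hn) (by positivity)
    (two_mul_one_div_pow_succ_le hn k)
    (div_le_one_of_le₀ (one_le_pow₀ (by linarith)) (by positivity)) hAB hAC

/-- Soundness of the KLM cautious-monotonicity rule CM under the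
super-polynomial ε-semantics. -/
theorem KLM_CM_superpoly {Ω : Type*} [MeasurableSpace Ω]
    (μ : ℕ → Measure Ω) (hμ : ∀ n, IsProbabilityMeasure (μ n))
    (A B C : Set Ω)
    (hA : MeasurableSet A) (hB : MeasurableSet B) (hC : MeasurableSet C)
    (h₁ : ∀ k : ℕ, ∃ N : ℕ, ∀ n ≥ N,
      ENNReal.ofReal (1 - 1 / (n : ℝ) ^ k) * μ n A ≤ μ n (A ∩ B))
    (h₂ : ∀ k : ℕ, ∃ N : ℕ, ∀ n ≥ N,
      ENNReal.ofReal (1 - 1 / (n : ℝ) ^ k) * μ n A ≤ μ n (A ∩ C)) :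
    ∀ k : ℕ, ∃ N : ℕ, ∀ n ≥ N,
      ENNReal.ofReal (1 - 1 / (n : ℝ) ^ k) * μ n (A ∩ B) ≤
        μ n (A ∩ B ∩ C) :=
  KLM_CM_superpoly_general μ hμ A B C hC h₁ h₂
end
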